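/- Let $c>0$ and let $X:(0,\infty)\to[0,\infty)$ satisfy $X'(t)\le 0$ and $\frac{d}{dt}(e^{ct}X(t))\le 0$ for $t>0$. If $Y_{p_0}(0)=-\int_0^\infty r^{p_0}dX(r)<\infty$ for some $p_0\ge 0$, then $\lim_{t\to\infty}e^{ct}X(t)=\lim_{p\to\infty}\frac{c^p Y_p(0)}{\Gamma(p+1)}$, where both limits exist. -/

import Mathlib

/-!
With `g t = exp (c t) * X t`, the normalised moment `c ^ p * Y p / Γ (p + 1)` is the integral of
`g` against the Gamma distribution of shape `p` and rate `c`. As `p → ∞` these distributions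
escape to infinity, and `g` is nonincreasing with limit `L`. Since `g ≥ L`, every such integral is
at least `L`; splitting at `T`, the part on `(T, ∞)` is at most `g T`, while the part on `(0, T]`
tends to zero because it is controlled by one finite moment of order `q`: `q = p₀` if `p₀ > 0`,
and `q = 1` if `p₀ = 0`, where `X` is bounded by its limit `Y 0` at `0`.
-/

open MeasureTheory Set Filter ProbabilityTheory Real
open scoped ENNReal Nat Topology

theorem antitoneOn_Ioi_of_deriv_nonpos {f : ℝ → ℝ} {a : ℝ}
    (hf : ∀ t > a, DifferentiableAt ℝ f t) (hf' : ∀ t > a, deriv f t ≤ 0) :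
    AntitoneOn f (Ioi a) :=
  antitoneOn_of_deriv_nonpos (convex_Ioi a)
    (fun t ht => (hf t ht).continuousAt.continuousWithinAt)
    (by rw [interior_Ioi]; exact fun t ht => (hf t ht).differentiableWithinAt)
    (by rwa [interior_Ioi])

theorem AntitoneOn.exists_tendsto_atTop {g : ℝ → ℝ} {a m : ℝ} (hg : AntitoneOn g (Ioi a))
    (hm : ∀ t > a, m ≤ g t) : ∃ L, Tendsto g atTop (𝓝 L) := by
  have hanti : Antitone fun t : Ioi a => g t := fun s t hst => hg s.2 t.2 hst
  have hbdd : BddBelow (range fun t : Ioi a => g t) := ⟨m, by rintro _ ⟨t, rfl⟩; exact hm t t.2⟩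
  exact ⟨_, tendsto_comp_val_Ioi_atTop.mp (tendsto_atTop_ciInf hanti hbdd)⟩

theorem AntitoneOn.le_of_tendsto_atTop {g : ℝ → ℝ} {a L : ℝ} (hg : AntitoneOn g (Ioi a))
    (hgL : Tendsto g atTop (𝓝 L)) {t : ℝ} (ht : a < t) : L ≤ g t :=
  le_of_tendsto hgL <| by
    filter_upwards [eventually_ge_atTop t] with s hs using hg ht (ht.trans_le hs) hs

theorem AntitoneOn.le_of_tendsto_nhdsGT {β : Type*} [LinearOrder β] [TopologicalSpace β]
    [OrderClosedTopology β] {f : ℝ → β} {a t : ℝ} {l : β} (hf : AntitoneOn f (Ioi a))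
    (hl : Tendsto f (𝓝[>] a) (𝓝 l)) (ht : a < t) : f t ≤ l :=
  ge_of_tendsto hl <| by
    filter_upwards [Ioo_mem_nhdsGT ht] with s hs using hf hs.1 ht hs.2.le

theorem tendsto_rpow_div_Gamma_atTop {a : ℝ} (ha : 0 ≤ a) :
    Tendsto (fun p => a ^ p / Gamma p) atTop (𝓝 0) := by
  set b := a + 1
  have hfloor : Tendsto (fun p : ℝ => ⌊p - 1⌋₊) atTop atTop :=
    tendsto_nat_floor_atTop.comp (tendsto_atTop_add_const_right _ (-1) tendsto_id)
  have hlim : Tendsto (fun p : ℝ => b ^ 2 * (b ^ ⌊p - 1⌋₊ / (⌊p - 1⌋₊)!)) atTop (𝓝 0) := by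
    simpa using ((FloorSemiring.tendsto_pow_div_factorial_atTop b).comp hfloor).const_mul (b ^ 2)
  refine squeeze_zero' ?_ ?_ hlim
  · filter_upwards [eventually_gt_atTop 0] with p hp
    exact div_nonneg (rpow_nonneg ha p) (Gamma_pos_of_pos hp).le
  filter_upwards [eventually_ge_atTop 2] with p hp
  set m := ⌊p - 1⌋₊
  have hm : (m : ℝ) ≤ p - 1 := Nat.floor_le (by linarith)
  have hm' : p - 1 < m + 1 := Nat.lt_floor_add_one _
  have hm1 : (1 : ℝ) ≤ m := by exact_mod_cast Nat.le_floor (by push_cast; linarith)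
  have hΓ : (m ! : ℝ) ≤ Gamma p := by
    rw [← Gamma_nat_eq_factorial]
    exact Gamma_strictMonoOn_Ici.monotoneOn (mem_Ici.mpr (by linarith)) (mem_Ici.mpr hp)
      (by linarith)
  have hpow : a ^ p ≤ b ^ (m + 2) := calc
    a ^ p ≤ b ^ p := rpow_le_rpow ha (by linarith) (by linarith)
    _ ≤ b ^ ((m + 2 : ℕ) : ℝ) := rpow_le_rpow_of_exponent_le (by linarith) (by push_cast; linarith)
    _ = b ^ (m + 2) := rpow_natCast b _
  calc a ^ p / Gamma p ≤ b ^ (m + 2) / m ! := div_le_div₀ (by positivity) hpow (by positivity) hΓ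
    _ = b ^ 2 * (b ^ m / m !) := by ring

theorem lintegral_Ioi_gammaPDF {a r : ℝ} (ha : 0 < a) (hr : 0 < r) :
    ∫⁻ x in Ioi 0, gammaPDF a r x = 1 := by
  rw [setLIntegral_congr Ioi_ae_eq_Ici, setLIntegral_eq_of_support_subset,
    lintegral_gammaPDF_eq_one ha hr]
  intro x hx
  by_contra hneg
  exact hx (gammaPDF_of_neg (not_le.mp hneg))

theorem gammaPDF_le_mul_gammaPDF {p q c r T : ℝ} (hq : 0 < q) (hqp : q ≤ p) (hc : 0 < c)
    (hr : 0 < r) (hrT : r ≤ T) :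
    gammaPDF p c r ≤
      ENNReal.ofReal (Gamma q * (c * T) ^ (p - q) / Gamma p) * gammaPDF q c r := by
  have hT : 0 < T := hr.trans_le hrT
  have hΓp := Gamma_pos_of_pos (hq.trans_le hqp)
  have hΓq := Gamma_pos_of_pos hq
  rw [gammaPDF_of_nonneg hr.le, gammaPDF_of_nonneg hr.le, ← ENNReal.ofReal_mul (by positivity)]
  refine ENNReal.ofReal_le_ofReal ?_
  have hr_pow : r ^ (p - 1) ≤ T ^ (p - q) * r ^ (q - 1) := calc
    r ^ (p - 1) = r ^ (p - q) * r ^ (q - 1) := by rw [← rpow_add hr]; ring_nf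
    _ ≤ T ^ (p - q) * r ^ (q - 1) := by gcongr
  have hc_pow : c ^ p = c ^ (p - q) * c ^ q := by rw [← rpow_add hc]; ring_nf
  rw [mul_rpow hc.le hT.le, hc_pow]
  calc _ ≤ c ^ (p - q) * c ^ q / Gamma p * (T ^ (p - q) * r ^ (q - 1)) * exp (-(c * r)) := by
        gcongr
    _ = _ := by field_simp

theorem tendsto_setLIntegral_Ioc_gammaPDF_mul {c q T : ℝ} {f : ℝ → ℝ≥0∞} (hc : 0 < c)
    (hq : 0 < q) (hT : 0 < T) (hfin : ∫⁻ r in Ioc 0 T, gammaPDF q c r * f r ≠ ∞) :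
    Tendsto (fun p => ∫⁻ r in Ioc 0 T, gammaPDF p c r * f r) atTop (𝓝 0) := by
  set K : ℝ → ℝ := fun p => Gamma q * (c * T) ^ (p - q) / Gamma p
  have hK : Tendsto K atTop (𝓝 0) := by
    have hcT : 0 < c * T := mul_pos hc hT
    have := (tendsto_rpow_div_Gamma_atTop hcT.le).const_mul (Gamma q / (c * T) ^ q)
    rw [mul_zero] at this
    refine this.congr fun p => ?_
    simp only [K, rpow_sub hcT]
    field_simp
  have hbound : ∀ᶠ p in atTop, ∫⁻ r in Ioc 0 T, gammaPDF p c r * f r ≤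
      ENNReal.ofReal (K p) * ∫⁻ r in Ioc 0 T, gammaPDF q c r * f r := by
    filter_upwards [eventually_ge_atTop q] with p hp
    rw [← lintegral_const_mul' _ _ ENNReal.ofReal_ne_top]
    refine setLIntegral_mono' measurableSet_Ioc fun r hr => ?_
    rw [← mul_assoc]
    exact mul_le_mul_left (gammaPDF_le_mul_gammaPDF hq hp hc hr.1 hr.2) _
  have hlim := ENNReal.Tendsto.mul_const (ENNReal.tendsto_ofReal hK) (Or.inr hfin)
  rw [ENNReal.ofReal_zero, zero_mul] at hlim
  exact tendsto_of_tendsto_of_tendsto_of_le_of_le' tendsto_const_nhds hlim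
    (Eventually.of_forall fun _ => zero_le) hbound

theorem tendsto_lintegral_gammaPDF_mul_of_antitoneOn {c q L : ℝ} {g : ℝ → ℝ} (hc : 0 < c)
    (hq : 0 < q) (hg : AntitoneOn g (Ioi 0)) (hgL : Tendsto g atTop (𝓝 L))
    (hfin : ∀ T > 0, ∫⁻ r in Ioc 0 T, gammaPDF q c r * ENNReal.ofReal (g r) ≠ ∞) :
    Tendsto (fun p => ∫⁻ r in Ioi 0, gammaPDF p c r * ENNReal.ofReal (g r)) atTop
      (𝓝 (ENNReal.ofReal L)) := by
  set Φ := fun p => ∫⁻ r in Ioi 0, gammaPDF p c r * ENNReal.ofReal (g r)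
  have hlower : ∀ᶠ p in atTop, ENNReal.ofReal L ≤ Φ p := by
    filter_upwards [eventually_gt_atTop 0] with p hp
    calc ENNReal.ofReal L = ∫⁻ r in Ioi 0, gammaPDF p c r * ENNReal.ofReal L := by
          rw [lintegral_mul_const' _ _ ENNReal.ofReal_ne_top, lintegral_Ioi_gammaPDF hp hc,
            one_mul]
      _ ≤ Φ p := setLIntegral_mono' measurableSet_Ioi fun r hr =>
          mul_le_mul_right (ENNReal.ofReal_le_ofReal (hg.le_of_tendsto_atTop hgL hr)) _
  have hupper : ∀ T > 0, limsup Φ atTop ≤ ENNReal.ofReal (g T) := by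
    intro T hT
    have htail : ∀ p > 0, ∫⁻ r in Ioi T, gammaPDF p c r * ENNReal.ofReal (g r) ≤
        ENNReal.ofReal (g T) := fun p hp => calc
      _ ≤ ∫⁻ r in Ioi T, gammaPDF p c r * ENNReal.ofReal (g T) :=
          setLIntegral_mono' measurableSet_Ioi fun r hr =>
            mul_le_mul_right (ENNReal.ofReal_le_ofReal (hg hT (hT.trans hr) hr.le)) _
      _ ≤ (∫⁻ r in Ioi 0, gammaPDF p c r) * ENNReal.ofReal (g T) := by
          rw [lintegral_mul_const' _ _ ENNReal.ofReal_ne_top]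
          exact mul_le_mul_left (lintegral_mono_set (Ioi_subset_Ioi hT.le)) _
      _ = ENNReal.ofReal (g T) := by rw [lintegral_Ioi_gammaPDF hp hc, one_mul]
    have hsplit : ∀ᶠ p in atTop, Φ p ≤
        (∫⁻ r in Ioc 0 T, gammaPDF p c r * ENNReal.ofReal (g r)) + ENNReal.ofReal (g T) := by
      filter_upwards [eventually_gt_atTop 0] with p hp
      simp only [Φ]
      rw [← Ioc_union_Ioi_eq_Ioi hT.le, lintegral_union measurableSet_Ioi Ioc_disjoint_Ioi_same]
      exact add_le_add_right (htail p hp) _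
    have hhead := tendsto_setLIntegral_Ioc_gammaPDF_mul hc hq hT (hfin T hT)
    calc limsup Φ atTop ≤ _ := limsup_le_limsup hsplit
      _ = ENNReal.ofReal (g T) := by simpa using (hhead.add_const _).limsup_eq
  refine tendsto_of_le_liminf_of_limsup_le (le_liminf_of_le (by isBoundedDefault) hlower) ?_
  exact ge_of_tendsto (ENNReal.tendsto_ofReal hgL) <| by
    filter_upwards [eventually_gt_atTop 0] with T hT using hupper T hT

theorem gammaPDF_mul_ofReal_exp_mul {p c r : ℝ} (hc : 0 ≤ c) (hp : 0 ≤ p) (hr : 0 ≤ r) (x : ℝ) :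
    gammaPDF p c r * ENNReal.ofReal (exp (c * r) * x) =
      ENNReal.ofReal (c ^ p / Gamma p) * ENNReal.ofReal (r ^ (p - 1) * x) := by
  have hΓ := Gamma_nonneg_of_nonneg hp
  rw [gammaPDF_of_nonneg hr, ← ENNReal.ofReal_mul (by positivity),
    ← ENNReal.ofReal_mul (by positivity), exp_neg]
  congr 1
  field_simp

theorem lintegral_gammaPDF_mul_exp_mul {c p : ℝ} (hc : 0 ≤ c) (hp : 0 < p) (X : ℝ → ℝ) :
    ∫⁻ r in Ioi 0, gammaPDF p c r * ENNReal.ofReal (exp (c * r) * X r) =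
      ENNReal.ofReal (c ^ p / Gamma (p + 1)) *
        (ENNReal.ofReal p * ∫⁻ r in Ioi 0, ENNReal.ofReal (r ^ (p - 1) * X r)) := by
  have hΓ := Gamma_pos_of_pos hp
  rw [← mul_assoc, ← ENNReal.ofReal_mul (by positivity), Gamma_add_one hp.ne',
    ← lintegral_const_mul' _ _ ENNReal.ofReal_ne_top]
  refine setLIntegral_congr_fun measurableSet_Ioi fun r hr => ?_
  rw [gammaPDF_mul_ofReal_exp_mul hc hp.le hr.le]
  congr 2
  field_simp

theorem setLIntegral_Ioc_gammaPDF_one_mul_exp_mul_ne_top {c T : ℝ} {X : ℝ → ℝ} {M : ℝ≥0∞}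
    (hc : 0 ≤ c) (hM : M ≠ ∞) (hXM : ∀ r > 0, ENNReal.ofReal (X r) ≤ M) :
    ∫⁻ r in Ioc 0 T, gammaPDF 1 c r * ENNReal.ofReal (exp (c * r) * X r) ≠ ∞ := by
  refine ne_top_of_le_ne_top (b := ∫⁻ _ in Ioc 0 T, ENNReal.ofReal c * M) ?_ ?_
  · rw [setLIntegral_const, Real.volume_Ioc]
    exact ENNReal.mul_ne_top (ENNReal.mul_ne_top ENNReal.ofReal_ne_top hM) ENNReal.ofReal_ne_top
  refine setLIntegral_mono' measurableSet_Ioc fun r hr => ?_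
  rw [gammaPDF_mul_ofReal_exp_mul hc zero_le_one hr.1.le]
  simp only [rpow_one, Gamma_one, div_one, sub_self, rpow_zero, one_mul]
  gcongr
  exact hXM r hr.1

/-- Limiting case: if `Y_{p₀}(0) = -∫₀^∞ r^{p₀} dX(r) < ∞` for some `p₀ ≥ 0`, then
`lim_{t→∞} e^{ct} X(t) = lim_{p→∞} c^p Y_p(0)/Γ(p+1)`, both limits existing. -/
theorem stmt2 (c : ℝ) (hc : 0 < c) (X : ℝ → ℝ)
    (hXpos : ∀ t > 0, 0 ≤ X t)
    (hXdiff : ∀ t > 0, DifferentiableAt ℝ X t)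
    (hX' : ∀ t > 0, deriv X t ≤ 0)
    (hXe : ∀ t > 0, deriv (fun s => Real.exp (c * s) * X s) t ≤ 0)
    (Y : ℝ → ℝ≥0∞)
    (hY : ∀ p > (0 : ℝ),
      Y p = ENNReal.ofReal p * ∫⁻ r in Ioi (0 : ℝ), ENNReal.ofReal (r ^ (p - 1) * X r))
    (hY0 : Tendsto (fun t => ENNReal.ofReal (X t)) (nhdsWithin 0 (Ioi 0)) (nhds (Y 0)))
    (p₀ : ℝ) (hp₀ : 0 ≤ p₀) (hfin : Y p₀ < ∞) :
    ∃ L : ℝ, Tendsto (fun t => Real.exp (c * t) * X t) atTop (nhds L) ∧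
      Tendsto (fun p => ENNReal.ofReal (c ^ p / Real.Gamma (p + 1)) * Y p) atTop
        (nhds (ENNReal.ofReal L)) := by
  set g := fun t => exp (c * t) * X t
  have hXanti : AntitoneOn X (Ioi 0) := antitoneOn_Ioi_of_deriv_nonpos hXdiff hX'
  have hganti : AntitoneOn g (Ioi 0) := antitoneOn_Ioi_of_deriv_nonpos
    (fun t ht => ((differentiableAt_id.const_mul c).exp).mul (hXdiff t ht)) hXe
  obtain ⟨L, hgL⟩ := hganti.exists_tendsto_atTop fun t ht => mul_nonneg (exp_pos _).le (hXpos t ht)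
  have hmix : ∀ p > 0, ENNReal.ofReal (c ^ p / Gamma (p + 1)) * Y p =
      ∫⁻ r in Ioi 0, gammaPDF p c r * ENNReal.ofReal (g r) := fun p hp => by
    rw [hY p hp, lintegral_gammaPDF_mul_exp_mul hc.le hp]
  obtain ⟨q, hq, hqfin⟩ : ∃ q > 0, ∀ T > 0,
      ∫⁻ r in Ioc 0 T, gammaPDF q c r * ENNReal.ofReal (g r) ≠ ∞ := by
    rcases hp₀.eq_or_lt with rfl | hp₀
    · refine ⟨1, one_pos, fun T _ => setLIntegral_Ioc_gammaPDF_one_mul_exp_mul_ne_top hc.le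
        hfin.ne fun r hr => ?_⟩
      exact (ENNReal.ofReal_mono.comp_antitoneOn hXanti).le_of_tendsto_nhdsGT hY0 hr
    · refine ⟨p₀, hp₀, fun T _ => ne_top_of_le_ne_top ?_ (lintegral_mono_set Ioc_subset_Ioi_self)⟩
      rw [← hmix p₀ hp₀]
      exact ENNReal.mul_ne_top ENNReal.ofReal_ne_top hfin.ne
  refine ⟨L, hgL, (tendsto_congr' ?_).mpr
    (tendsto_lintegral_gammaPDF_mul_of_antitoneOn hc hq hganti hgL hqfin)⟩
  filter_upwards [eventually_gt_atTop 0] with p hp using hmix p hp
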